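/- arXiv:1812.04390 — 7 statements merged into one kernel-verified Lean document; each statement's English description precedes it below -/
import Mathlib

section
/- For every integer n ≥ 1, every commutative ring R, all β, x_1, …, x_n ∈ R and all y_1, y_2, … ∈ R, the n×n determinant det([x_r|y]^{n−c}(1+βx_r)^{c−1})_{1≤r,c≤n} equals the Vandermonde product ∏_{1≤i<j≤n}(x_i − x_j). (For n = 1 both sides equal 1.) -/
/-!
With `u = 1 + β x` one has `x ⊕ y_t = x + y_t u`, so the entry in column `c` is the
homogeneous form `u^c ∏_{t < n-1-c} (x + y_t u)` of degree `n - 1` in `(u, x)`: the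
homogenization of `U^c ∏_t (1 + y_t U)`. In the basis `u^k x^(n-1-k)` these forms have a
unitriangular coefficient matrix, so the determinant is that of the projective Vandermonde
matrix `(u_r^k x_r^(n-1-k))`, namely `∏_{i<j} (u_j x_i - u_i x_j) = ∏_{i<j} (x_i - x_j)`.
-/

/-- `[x|y]^j = (x ⊕ y_1)(x ⊕ y_2)⋯(x ⊕ y_j)` where `a ⊕ b = a + b + βab` and
`y t` denotes `y_{t+1}` (0-based indexing). -/
def fpow {R : Type*} [CommRing R] (β : R) (y : ℕ → R) (x : R) (j : ℕ) : R :=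
  ∏ t ∈ Finset.range j, (x + y t + β * x * y t)

open Polynomial Finset

namespace Matrix

variable {R : Type*} [CommRing R] {n : ℕ}

theorem eval_homogenize_eq_projVandermonde_mul (v w : Fin n → R) (p : Fin n → R[X]) :
    of (fun i j => MvPolynomial.eval ![v i, w i] ((p j).homogenize (n - 1))) =
      projVandermonde v w * of (fun (i j : Fin n) => (p j).coeff i) := by
  ext i j
  obtain ⟨m, rfl⟩ : ∃ m, n = m + 1 := ⟨n - 1, by have := i.pos; omega⟩
  simp only [homogenize, map_sum, MvPolynomial.eval_monomial, of_apply, mul_apply,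
    projVandermonde_apply, Nat.sum_antidiagonal_eq_sum_range_succ_mk, add_tsub_cancel_right,
    ← Fin.sum_univ_eq_sum_range (fun k => _ * _) (m + 1)]
  refine sum_congr rfl fun k _ => ?_
  rw [Finsupp.prod_fintype _ _ (by simp), Fin.prod_univ_two, Fin.val_rev]
  simp only [Fin.isValue, cons_val_zero, cons_val_one, cons_val_fin_one, Finsupp.coe_update,
    Function.update_self, Function.update_of_ne zero_ne_one, Finsupp.single_eq_same,
    Nat.add_sub_add_right]
  ring

theorem det_coeff_X_pow_mul (q : Fin n → R[X]) (hq : ∀ j, (q j).coeff 0 = 1) :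
    (of fun (i j : Fin n) => (X ^ (j : ℕ) * q j).coeff i).det = 1 := by
  rw [det_of_isLowerTriangular]
  · simp [coeff_X_pow_mul', hq]
  · intro i j (hij : i < j)
    simp [coeff_X_pow_mul', not_le.mpr hij]

theorem det_eval_homogenize_X_pow_mul (v w : Fin n → R) (q : Fin n → R[X])
    (hq : ∀ j, (q j).coeff 0 = 1) :
    (of fun i (j : Fin n) =>
        MvPolynomial.eval ![v i, w i] ((X ^ (j : ℕ) * q j).homogenize (n - 1))).det =
      (projVandermonde v w).det := by
  rw [eval_homogenize_eq_projVandermonde_mul, det_mul, det_coeff_X_pow_mul q hq, mul_one]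

end Matrix

namespace Polynomial

theorem eval_homogenize_X_pow_mul_prod {R : Type*} [CommRing R] (y : ℕ → R) (c m : ℕ)
    (a b : R) :
    MvPolynomial.eval ![a, b]
        ((X ^ c * ∏ t ∈ range m, (C (y t) * X + 1)).homogenize (c + m)) =
      a ^ c * ∏ t ∈ range m, (y t * a + b) := by
  have hdeg : ∀ t ∈ range m, (C (y t) * X + 1).natDegree ≤ 1 := fun t _ => by
    compute_degree
  have hprod := homogenize_finsetProd hdeg
  rw [sum_const, card_range, smul_eq_mul, mul_one] at hprod
  have hprod_deg : (∏ t ∈ range m, (C (y t) * X + 1)).natDegree ≤ m := by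
    simpa using (natDegree_prod_le _ _).trans (sum_le_sum hdeg)
  rw [homogenize_mul _ _ (natDegree_X_pow_le c) hprod_deg, hprod]
  simp

end Polynomial

theorem stmt0_general {R : Type*} [CommRing R] (n : ℕ)
    (β : R) (x : Fin n → R) (y : ℕ → R) :
    (Matrix.of fun r c : Fin n =>
        fpow β y (x r) (n - 1 - (c : ℕ)) * (1 + β * x r) ^ (c : ℕ)).det
      = ∏ i : Fin n, ∏ j ∈ Finset.Ioi i, (x i - x j) := by
  set u : Fin n → R := fun r => 1 + β * x r
  set q : Fin n → R[X] := fun c => ∏ t ∈ range (n - 1 - c), (C (y t) * X + 1)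
  have hq : ∀ c, (q c).coeff 0 = 1 := fun c => by
    simp [q, coeff_zero_eq_eval_zero, eval_prod]
  have hentry : (Matrix.of fun r c : Fin n =>
      fpow β y (x r) (n - 1 - (c : ℕ)) * u r ^ (c : ℕ)) =
      Matrix.of fun r (c : Fin n) =>
        MvPolynomial.eval ![u r, x r] ((X ^ (c : ℕ) * q c).homogenize (n - 1)) := by
    ext r c
    have hc : (c : ℕ) + (n - 1 - c) = n - 1 := by omega
    have hform := eval_homogenize_X_pow_mul_prod y c (n - 1 - c) (u r) (x r)
    rw [hc] at hform
    rw [Matrix.of_apply, Matrix.of_apply, hform, fpow, mul_comm]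
    exact congrArg _ (prod_congr rfl fun t _ => by ring)
  rw [hentry, Matrix.det_eval_homogenize_X_pow_mul u x q hq, Matrix.det_projVandermonde]
  exact prod_congr rfl fun i _ => prod_congr rfl fun j _ => by ring

/-- The determinant `det([x_r|y]^{n−c}(1+βx_r)^{c−1})_{1≤r,c≤n}` equals the Vandermonde product
`∏_{1≤i<j≤n} (x_i − x_j)`. -/
theorem stmt0 {R : Type*} [CommRing R] (n : ℕ) (hn : 1 ≤ n)
    (β : R) (x : Fin n → R) (y : ℕ → R) :
    (Matrix.of fun r c : Fin n =>
        fpow β y (x r) (n - 1 - (c : ℕ)) * (1 + β * x r) ^ (c : ℕ)).det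
      = ∏ i : Fin n, ∏ j ∈ Finset.Ioi i, (x i - x j) :=
  stmt0_general n β x y
end

section
/- (Gustafson–Milne identity.) Let λ = (λ_1 ≥ ⋯ ≥ λ_k ≥ 0) be a partition with k ≤ n parts satisfying λ_k ≥ n − k. Then s_{(λ_1−n+k, λ_2−n+k, …, λ_k−n+k)}(x_1,…,x_n) = Σ_{S ∈ binom([n],k)} s_λ(x_S) / (∏_{i∈S}∏_{j∈S̄}(x_i − x_j)), where the left-hand side is the Schur polynomial in n variables indexed by the partition (λ_1−n+k, …, λ_k−n+k) padded with zeros to length n. -/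
/-!
Laplace-expand the `n × n` bialternant along its first `k` columns. Since `λ_k ≥ n − k`, the
exponents in those columns are `λ_j + k − 1 − j`, so the minor on a row set `S` is the numerator
of `s_λ(x_S)`, while the complementary minor on the last `n − k` columns (exponents
`n − k − 1, …, 0`) is the Vandermonde product `Δ(x_S̄)`. Dividing by `Δ(x)` finishes the proof,
because `Δ(x)` factors as `± Δ(x_S) Δ(x_S̄) ∏_{i∈S, j∈S̄} (x_i − x_j)` with the sign of the same
shuffle permutation that carries the Laplace term.
-/

/-- The Schur polynomial given by the bialternant formula
`s_λ(x_1,…,x_n) = det(x_i^{λ_j+n−j})_{1≤i,j≤n} / ∏_{i<j}(x_i − x_j)`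
(indices `i, j : Fin n` are 0-based, so `n − j` becomes `n − 1 − j`). -/
noncomputable def schur {F : Type*} [Field F] {n : ℕ} (lam : Fin n → ℕ) (x : Fin n → F) : F :=
  (Matrix.of fun i j : Fin n => x i ^ (lam j + (n - 1 - (j : ℕ)))).det
    / ∏ i : Fin n, ∏ j ∈ Finset.Ioi i, (x i - x j)

open Finset Equiv Matrix

def vandermondeProd {R : Type*} [CommRing R] {m : ℕ} (z : Fin m → R) : R :=
  ∏ i, ∏ j ∈ Ioi i, (z i - z j)

theorem Finset.prod_Ioi_eq_prod_ite {M ι : Type*} [CommMonoid M] [Fintype ι] [LinearOrder ι]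
    [LocallyFiniteOrderTop ι] (f : ι → ι → M) :
    ∏ i, ∏ j ∈ Ioi i, f i j = ∏ i, ∏ j, if i < j then f i j else 1 := by
  refine prod_congr rfl fun i _ => ?_
  rw [← prod_filter]
  congr 1
  ext
  simp

theorem Finset.prod_orderEmbOfFin {M α : Type*} [CommMonoid M] [LinearOrder α] (s : Finset α)
    {k : ℕ} (h : s.card = k) (f : α → M) : ∏ a, f (s.orderEmbOfFin h a) = ∏ i ∈ s, f i := by
  conv_rhs => rw [← map_orderEmbOfFin_univ s h, prod_map]
  rfl

theorem Fin.prod_Ioi_rev {M : Type*} [CommMonoid M] {m : ℕ} (g : Fin m → Fin m → M) :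
    ∏ i, ∏ j ∈ Ioi i, g (Fin.rev j) (Fin.rev i) = ∏ i, ∏ j ∈ Ioi i, g i j := by
  rw [prod_comm' (t' := univ) (s' := Iio) (fun i j => by simp)]
  rw [← Equiv.prod_comp Fin.revPerm]
  refine prod_congr rfl fun j _ => ?_
  rw [Fin.revPerm_apply, Fin.rev_rev, ← Fin.map_revPerm_Ioi, prod_map]
  simp

section Vandermonde

variable {R : Type*} [CommRing R] {m : ℕ}

theorem det_pow_rev_eq_vandermondeProd (z : Fin m → R) :
    (of fun i j : Fin m => z i ^ (m - 1 - (j : ℕ))).det = vandermondeProd z := by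
  have hrev : (of fun i j : Fin m => z i ^ (m - 1 - (j : ℕ)))
      = (vandermonde (z ∘ Fin.rev)).submatrix Fin.revPerm Fin.revPerm := by
    ext i j
    simp only [submatrix_apply, vandermonde_apply, of_apply, Function.comp_apply,
      Fin.revPerm_apply, Fin.rev_rev, Fin.val_rev]
    congr 1
    omega
  rw [hrev, det_submatrix_equiv_self, det_vandermonde]
  exact Fin.prod_Ioi_rev fun i j => z i - z j

theorem vandermondeProd_comp_perm (z : Fin m → R) (σ : Perm (Fin m)) :
    vandermondeProd (z ∘ σ) = Perm.sign σ * vandermondeProd z := by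
  rw [← det_pow_rev_eq_vandermondeProd, ← det_pow_rev_eq_vandermondeProd, ← det_permute]
  rfl

theorem vandermondeProd_append {k : ℕ} (z : Fin (k + m) → R) :
    vandermondeProd z = vandermondeProd (z ∘ Fin.castAdd m) * vandermondeProd (z ∘ Fin.natAdd k) *
      ∏ a, ∏ b, (z (Fin.castAdd m a) - z (Fin.natAdd k b)) := by
  have hcc : ∀ a a' : Fin k, Fin.castAdd m a < Fin.castAdd m a' ↔ a < a' := fun _ _ => by
    simp only [Fin.lt_def, Fin.val_castAdd]
  have hlt : ∀ (a : Fin k) (b : Fin m), Fin.castAdd m a < Fin.natAdd k b := fun a b => by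
    simp only [Fin.lt_def, Fin.val_castAdd, Fin.val_natAdd]; omega
  have hnlt : ∀ (a : Fin k) (b : Fin m), ¬ Fin.natAdd k b < Fin.castAdd m a := fun a b =>
    (hlt a b).asymm
  simp only [vandermondeProd, prod_Ioi_eq_prod_ite, Fin.prod_univ_add, hcc,
    Fin.natAdd_lt_natAdd_iff, hlt, hnlt, if_true, if_false, prod_const_one, mul_one,
    prod_mul_distrib, Function.comp_apply]
  ring

theorem vandermondeProd_ne_zero [IsDomain R] {z : Fin m → R} (hz : Function.Injective z) :
    vandermondeProd z ≠ 0 :=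
  prod_ne_zero_iff.2 fun _ _ => prod_ne_zero_iff.2 fun _ hj =>
    sub_ne_zero.2 <| hz.ne (mem_Ioi.1 hj).ne

end Vandermonde

section Laplace

variable {k m : ℕ}

theorem card_compl_of_card_eq {S : Finset (Fin (k + m))} (hS : S.card = k) : Sᶜ.card = m := by
  rw [card_compl, hS, Fintype.card_fin, Nat.add_sub_cancel_left]

def shufflePerm (S : {S : Finset (Fin (k + m)) // S.card = k}) : Perm (Fin (k + m)) :=
  finSumFinEquiv.symm.trans <|
    ((S.1.orderIsoOfFin S.2).toEquiv.sumCongr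
        (S.1ᶜ.orderIsoOfFin (card_compl_of_card_eq S.2)).toEquiv).trans <|
      ((Equiv.refl _).sumCongr (subtypeEquivRight fun _ => mem_compl)).trans <|
        sumCompl (· ∈ S.1)

@[simp]
theorem shufflePerm_castAdd (S : {S : Finset (Fin (k + m)) // S.card = k}) (a : Fin k) :
    shufflePerm S (Fin.castAdd m a) = S.1.orderEmbOfFin S.2 a := by
  simp [shufflePerm]

@[simp]
theorem shufflePerm_natAdd (S : {S : Finset (Fin (k + m)) // S.card = k}) (b : Fin m) :
    shufflePerm S (Fin.natAdd k b) = S.1ᶜ.orderEmbOfFin (card_compl_of_card_eq S.2) b := by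
  simp [shufflePerm]

def laplacePerm (p : Σ _ : {S : Finset (Fin (k + m)) // S.card = k},
    Perm (Fin k) × Perm (Fin m)) : Perm (Fin (k + m)) :=
  shufflePerm p.1 * finSumFinEquiv.permCongr (p.2.1.sumCongr p.2.2)

@[simp]
theorem laplacePerm_castAdd (S : {S : Finset (Fin (k + m)) // S.card = k})
    (τ : Perm (Fin k)) (ρ : Perm (Fin m)) (a : Fin k) :
    laplacePerm ⟨S, τ, ρ⟩ (Fin.castAdd m a) = S.1.orderEmbOfFin S.2 (τ a) := by
  simp [laplacePerm, permCongr_apply]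

@[simp]
theorem laplacePerm_natAdd (S : {S : Finset (Fin (k + m)) // S.card = k})
    (τ : Perm (Fin k)) (ρ : Perm (Fin m)) (b : Fin m) :
    laplacePerm ⟨S, τ, ρ⟩ (Fin.natAdd k b) =
      S.1ᶜ.orderEmbOfFin (card_compl_of_card_eq S.2) (ρ b) := by
  simp [laplacePerm, permCongr_apply]

theorem sign_laplacePerm (S : {S : Finset (Fin (k + m)) // S.card = k})
    (τ : Perm (Fin k)) (ρ : Perm (Fin m)) :
    Perm.sign (laplacePerm ⟨S, τ, ρ⟩) =
      Perm.sign (shufflePerm S) * (Perm.sign τ * Perm.sign ρ) := by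
  rw [laplacePerm, map_mul, Perm.sign_permCongr, Perm.sign_sumCongr]

theorem range_laplacePerm_comp_castAdd (S : {S : Finset (Fin (k + m)) // S.card = k})
    (τ : Perm (Fin k)) (ρ : Perm (Fin m)) :
    Set.range (laplacePerm ⟨S, τ, ρ⟩ ∘ Fin.castAdd m) = S.1 := by
  rw [← S.1.range_orderEmbOfFin S.2, ← τ.surjective.range_comp (S.1.orderEmbOfFin S.2)]
  congr 1
  ext1 a
  simp

theorem laplacePerm_injective : Function.Injective (laplacePerm (k := k) (m := m)) := by
  rintro ⟨S, τ, ρ⟩ ⟨S', τ', ρ'⟩ h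
  have hS : S = S' := Subtype.ext <| coe_inj.1 <| by
    rw [← range_laplacePerm_comp_castAdd S τ ρ, ← range_laplacePerm_comp_castAdd S' τ' ρ', h]
  subst hS
  have hτ : τ = τ' := by
    ext1 a
    simpa using congr($h (Fin.castAdd m a))
  have hρ : ρ = ρ' := by
    ext1 b
    simpa using congr($h (Fin.natAdd k b))
  rw [hτ, hρ]

theorem laplacePerm_bijective : Function.Bijective (laplacePerm (k := k) (m := m)) := by
  refine (Fintype.bijective_iff_injective_and_card _).2 ⟨laplacePerm_injective, ?_⟩
  simp only [Fintype.card_sigma, Fintype.card_prod, Fintype.card_perm, Fintype.card_fin,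
    sum_const, card_univ, Fintype.card_finset_len, smul_eq_mul]
  rw [← Nat.add_choose_mul_factorial_mul_factorial, Nat.choose_symm_add, mul_assoc]

theorem det_eq_sum_shufflePerm {R : Type*} [CommRing R]
    (M : Matrix (Fin (k + m)) (Fin (k + m)) R) :
    M.det = ∑ S : {S : Finset (Fin (k + m)) // S.card = k}, (Perm.sign (shufflePerm S) : R) *
      ((M.submatrix (S.1.orderEmbOfFin S.2) (Fin.castAdd m)).det *
        (M.submatrix (S.1ᶜ.orderEmbOfFin (card_compl_of_card_eq S.2)) (Fin.natAdd k)).det) := by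
  rw [det_apply', ← laplacePerm_bijective.sum_comp, ← univ_sigma_univ, sum_sigma]
  refine sum_congr rfl fun S _ => ?_
  rw [Fintype.sum_prod_type, det_apply', det_apply', sum_mul_sum, mul_sum]
  refine sum_congr rfl fun τ _ => ?_
  rw [mul_sum]
  refine sum_congr rfl fun ρ _ => ?_
  simp only [sign_laplacePerm, Fin.prod_univ_add, laplacePerm_castAdd, laplacePerm_natAdd,
    submatrix_apply]
  push_cast
  ring

end Laplace

theorem vandermondeProd_comp_shufflePerm {R : Type*} [CommRing R] {k m : ℕ} (z : Fin (k + m) → R)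
    (S : {S : Finset (Fin (k + m)) // S.card = k}) :
    vandermondeProd (z ∘ shufflePerm S) = vandermondeProd (z ∘ S.1.orderEmbOfFin S.2) *
      vandermondeProd (z ∘ S.1ᶜ.orderEmbOfFin (card_compl_of_card_eq S.2)) *
        ∏ i ∈ S.1, ∏ j ∈ S.1ᶜ, (z i - z j) := by
  rw [vandermondeProd_append, ← S.1.prod_orderEmbOfFin S.2]
  simp only [← S.1ᶜ.prod_orderEmbOfFin (card_compl_of_card_eq S.2), Function.comp_def,
    shufflePerm_castAdd, shufflePerm_natAdd]

theorem sign_shufflePerm_mul_div_vandermondeProd {F : Type*} [Field F] {k m : ℕ}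
    {z : Fin (k + m) → F} (hz : Function.Injective z) (S : {S : Finset (Fin (k + m)) // S.card = k})
    (N : F) :
    (Perm.sign (shufflePerm S) : F) *
        (N * vandermondeProd (z ∘ S.1ᶜ.orderEmbOfFin (card_compl_of_card_eq S.2))) /
        vandermondeProd z =
      N / vandermondeProd (z ∘ S.1.orderEmbOfFin S.2) / ∏ i ∈ S.1, ∏ j ∈ S.1ᶜ, (z i - z j) := by
  have hsplit := vandermondeProd_comp_shufflePerm z S
  rw [vandermondeProd_comp_perm] at hsplit
  set ε : F := ((Perm.sign (shufflePerm S) : ℤ) : F)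
  have hε : ε * ε = 1 := by
    simp only [ε, ← Int.cast_mul, ← Units.val_mul, Int.units_mul_self, Units.val_one, Int.cast_one]
  have hV : vandermondeProd z ≠ 0 := vandermondeProd_ne_zero hz
  have hne : ε * vandermondeProd z ≠ 0 := mul_ne_zero (left_ne_zero_of_mul_eq_one hε) hV
  rw [hsplit] at hne
  obtain ⟨⟨hVs, hVc⟩, hC⟩ := mul_ne_zero_iff.1 hne |>.imp_left mul_ne_zero_iff.1
  field_simp
  linear_combination (-ε * N) * hsplit + N * vandermondeProd z * hε

/-- The Gustafson–Milne identity: for a partition `λ_1 ≥ ⋯ ≥ λ_k ≥ n − k`,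
`s_{(λ_1−n+k,…,λ_k−n+k)}(x_1,…,x_n) = Σ_{S ∈ binom([n],k)} s_λ(x_S) / ∏_{i∈S}∏_{j∈S̄}(x_i−x_j)`. -/
theorem stmt7 {F : Type*} [Field F] (n k : ℕ) (hkn : k ≤ n)
    (x : Fin n → F) (hx : Function.Injective x)
    (lam : Fin k → ℕ) (hlam : Antitone lam) (hk : 0 < k)
    (hmin : n - k ≤ lam ⟨k - 1, Nat.sub_lt hk Nat.one_pos⟩) :
    schur (fun i : Fin n => if h : (i : ℕ) < k then lam ⟨i, h⟩ - (n - k) else 0) x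
      = ∑ S : {S : Finset (Fin n) // S.card = k},
          schur lam (fun i : Fin k => x ((S.1.orderIsoOfFin S.2 i : Fin n)))
            / ∏ i ∈ S.1, ∏ j ∈ S.1ᶜ, (x i - x j) := by
  obtain ⟨m, rfl⟩ := Nat.exists_eq_add_of_le hkn
  rw [Nat.add_sub_cancel_left] at hmin ⊢
  have hm : ∀ a, m ≤ lam a := fun a => hmin.trans <| hlam <| Fin.le_def.2 <| by
    dsimp only; omega
  rw [schur, det_eq_sum_shufflePerm, sum_div]
  refine sum_congr rfl fun S _ => ?_
  simp only [coe_orderIsoOfFin_apply]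
  set M : Matrix (Fin (k + m)) (Fin (k + m)) F := of fun i j =>
    x i ^ ((if h : (j : ℕ) < k then lam ⟨j, h⟩ - m else 0) + (k + m - 1 - (j : ℕ)))
  have htop : M.submatrix (S.1.orderEmbOfFin S.2) (Fin.castAdd m) =
      of fun a a' : Fin k => x (S.1.orderEmbOfFin S.2 a) ^ (lam a' + (k - 1 - (a' : ℕ))) := by
    ext a a'
    simp only [M, submatrix_apply, of_apply, Fin.val_castAdd, dif_pos a'.isLt, Fin.eta]
    have := hm a'
    congr 1
    omega
  have hbot : M.submatrix (S.1ᶜ.orderEmbOfFin (card_compl_of_card_eq S.2)) (Fin.natAdd k) =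
      of fun b b' : Fin m =>
        (x ∘ S.1ᶜ.orderEmbOfFin (card_compl_of_card_eq S.2)) b ^ (m - 1 - (b' : ℕ)) := by
    ext b b'
    simp only [M, submatrix_apply, of_apply, Fin.val_natAdd,
      dif_neg (Nat.not_lt.2 (Nat.le_add_right k b')), Function.comp_apply]
    congr 1
    omega
  rw [htop, hbot, det_pow_rev_eq_vandermondeProd, schur]
  exact sign_shufflePerm_mul_div_vandermondeProd hx S _
end

section
/- (Good's identity.) For every integer n ≥ 1, every field F, and all pairwise distinct nonzero x_1, …, x_n ∈ F such that 1 − x_i/x_j ≠ 0 for all i ≠ j, one has 1 = Σ_{i=1}^n ∏_{j≠i} (1 − x_i/x_j)^{−1}. -/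
/-!
Evaluate the Lagrange interpolation identity `∑ i, Lᵢ = 1` at `0`: the basis polynomial
`Lᵢ = ∏_{j ≠ i} (X - x_j) / (x_i - x_j)` takes the value `∏_{j ≠ i} (1 - x_i / x_j)⁻¹` there.
-/

open Polynomial Finset

namespace Lagrange

variable {F : Type*} [Field F]

theorem eval_zero_basisDivisor {a b : F} (hb : b ≠ 0) :
    (basisDivisor a b).eval 0 = (1 - a / b)⁻¹ := by
  rw [basisDivisor, eval_mul, eval_C, eval_sub, eval_X, eval_C, one_sub_div hb, inv_div,
    zero_sub, ← neg_sub b a, inv_neg, neg_mul_neg, inv_mul_eq_div]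

variable {ι : Type*} [DecidableEq ι] {s : Finset ι} {v : ι → F}

theorem eval_zero_basis (hv : ∀ j ∈ s, v j ≠ 0) (i : ι) :
    (Lagrange.basis s v i).eval 0 = ∏ j ∈ s.erase i, (1 - v i / v j)⁻¹ := by
  rw [Lagrange.basis, eval_prod]
  exact prod_congr rfl fun j hj ↦ eval_zero_basisDivisor (hv j (mem_of_mem_erase hj))

theorem sum_prod_inv_one_sub_div_eq_one (hs : s.Nonempty) (hvs : Set.InjOn v s)
    (hv : ∀ j ∈ s, v j ≠ 0) :
    ∑ i ∈ s, ∏ j ∈ s.erase i, (1 - v i / v j)⁻¹ = 1 := by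
  have := congrArg (eval 0) (sum_basis hvs hs)
  rwa [eval_finsetSum, eval_one, sum_congr rfl fun i _ ↦ eval_zero_basis hv i] at this

end Lagrange

theorem stmt9_general {F : Type*} [Field F] (n : ℕ) (hn : 1 ≤ n)
    (x : Fin n → F) (hx0 : ∀ i, x i ≠ 0) (hx : Function.Injective x) :
    (1 : F) = ∑ i : Fin n, ∏ j ∈ Finset.univ.erase i, (1 - x i / x j)⁻¹ :=
  (Lagrange.sum_prod_inv_one_sub_div_eq_one ⟨⟨0, hn⟩, mem_univ _⟩ hx.injOn
    fun j _ ↦ hx0 j).symm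

/-- Good's identity: for pairwise distinct nonzero `x_1,…,x_n` in a field,
`1 = Σ_{i=1}^n ∏_{j≠i} (1 − x_i/x_j)⁻¹`. -/
theorem stmt9 {F : Type*} [Field F] (n : ℕ) (hn : 1 ≤ n)
    (x : Fin n → F) (hx0 : ∀ i, x i ≠ 0) (hx : Function.Injective x)
    (h1 : ∀ i j, i ≠ j → 1 - x i / x j ≠ 0) :
    (1 : F) = ∑ i : Fin n, ∏ j ∈ Finset.univ.erase i, (1 - x i / x j)⁻¹ :=
  stmt9_general n hn x hx0 hx
end

section
/- (Louck's identity.) Let m ≥ n − 1 ≥ 0 be integers. For every field F and all pairwise distinct x_1, …, x_n ∈ F, the complete homogeneous symmetric polynomial of degree m − n + 1 satisfies h_{m−n+1}(x_1,…,x_n) = Σ_{i=1}^n x_i^m / ∏_{j≠i}(x_i − x_j). -/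
/-- The complete homogeneous symmetric polynomial
`h_d(x_1,…,x_n) = Σ_{1 ≤ i_1 ≤ i_2 ≤ ⋯ ≤ i_d ≤ n} x_{i_1} x_{i_2} ⋯ x_{i_d}`,
realized as a sum over weakly increasing functions `Fin d → Fin n`. -/
def hpoly {R : Type*} [CommRing R] (n d : ℕ) (x : Fin n → R) : R :=
  ∑ f : {f : Fin d → Fin n // ∀ i j, i ≤ j → f i ≤ f j}, ∏ t : Fin d, x (f.1 t)

/-!
The right-hand side is the divided difference of `t ↦ t ^ m` at the nodes `x_1, …, x_n`.
Removing the node `x_1`, the divided difference of `t ↦ t * f t` is `x_1` times that of `f`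
plus the divided difference of `f` at `x_2, …, x_n`. This is exactly the recursion
`h_{d+1}(x_1, …, x_n) = x_1 h_d(x_1, …, x_n) + h_{d+1}(x_2, …, x_n)`, which comes from
splitting the weakly increasing sequences of indices by whether they start with `1`.
A double induction on `n` and `m` therefore reduces the identity to `m = n - 1`, where
Lagrange interpolation says that the divided difference of `t ^ (n - 1)` is its leading
coefficient `1`.
-/

open Finset

section DividedDifference

variable {ι κ F : Type*} [DecidableEq ι] [Field F]

def dividedDiff (s : Finset ι) (v : ι → F) (f : F → F) : F :=
  ∑ i ∈ s, f (v i) / ∏ j ∈ s.erase i, (v i - v j)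

theorem dividedDiff_insert_sub_mul {s : Finset ι} {a : ι} {v : ι → F} (ha : a ∉ s)
    (hv : Set.InjOn v (insert a s)) (f : F → F) :
    dividedDiff (insert a s) v (fun t => (t - v a) * f t) = dividedDiff s v f := by
  rw [dividedDiff, sum_insert ha, sub_self, zero_mul, zero_div, zero_add]
  refine sum_congr rfl fun i hi => ?_
  have hia : i ≠ a := ne_of_mem_of_not_mem hi ha
  rw [erase_insert_of_ne hia.symm, prod_insert (fun h => ha (mem_of_mem_erase h)),
    mul_div_mul_left _ _ (sub_ne_zero.2 fun h => hia (hv (by simp [hi]) (by simp) h))]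

theorem dividedDiff_insert_id_mul {s : Finset ι} {a : ι} {v : ι → F} (ha : a ∉ s)
    (hv : Set.InjOn v (insert a s)) (f : F → F) :
    dividedDiff (insert a s) v (fun t => t * f t)
      = v a * dividedDiff (insert a s) v f + dividedDiff s v f := by
  rw [← dividedDiff_insert_sub_mul ha hv, dividedDiff, dividedDiff, dividedDiff, mul_sum,
    ← sum_add_distrib]
  refine sum_congr rfl fun i _ => ?_
  ring

theorem dividedDiff_map [DecidableEq κ] (s : Finset κ) (e : κ ↪ ι) (v : ι → F) (f : F → F) :
    dividedDiff (s.map e) v f = dividedDiff s (v ∘ e) f := by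
  simp only [dividedDiff, sum_map, ← map_erase, prod_map, Function.comp_apply]

theorem dividedDiff_pow_card_sub_one {s : Finset ι} {v : ι → F} (hv : Set.InjOn v s)
    (hs : s.Nonempty) : dividedDiff s v (· ^ (#s - 1)) = 1 := by
  have hdeg : (Polynomial.X ^ (#s - 1) : Polynomial F).degree < #s := by
    rw [Polynomial.degree_X_pow]
    exact_mod_cast Nat.sub_lt hs.card_pos one_pos
  simpa [dividedDiff] using (Lagrange.coeff_eq_sum hv hdeg).symm

theorem dividedDiff_fin_pow_succ {n : ℕ} {x : Fin (n + 1) → F} (hx : Function.Injective x)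
    (m : ℕ) : dividedDiff univ x (· ^ (m + 1))
      = x 0 * dividedDiff univ x (· ^ m) + dividedDiff univ (Fin.tail x) (· ^ m) := by
  have huniv : (univ : Finset (Fin (n + 1))) = insert 0 (univ.map (Fin.succEmb n)) := by
    rw [Fin.univ_succ, cons_eq_insert]
    rfl
  have h := dividedDiff_insert_id_mul (s := univ.map (Fin.succEmb n)) (a := 0) (by simp)
    hx.injOn (· ^ m)
  simp only [← huniv, ← pow_succ'] at h
  rw [h, dividedDiff_map]
  rfl

end DividedDifference

section CompleteHomogeneous

theorem Fin.monotone_cons_zero {n d : ℕ} {g : Fin d → Fin (n + 1)} (hg : Monotone g) :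
    Monotone (Fin.cons 0 g : Fin (d + 1) → Fin (n + 1)) :=
  monotone_iff_forall_lt.2 <|
    (Fin.liftFun_cons (· ≤ ·)).2 ⟨fun _ => Fin.zero_le _, monotone_iff_forall_lt.1 hg⟩

noncomputable def monotoneFinSuccEquiv (n d : ℕ) :
    {g : Fin d → Fin (n + 1) // Monotone g} ⊕ {g : Fin (d + 1) → Fin n // Monotone g} ≃
      {f : Fin (d + 1) → Fin (n + 1) // Monotone f} :=
  Equiv.ofBijective
    (Sum.elim (fun g => ⟨Fin.cons 0 g.1, Fin.monotone_cons_zero g.2⟩)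
      (fun g => ⟨Fin.succ ∘ g.1, Fin.strictMono_succ.monotone.comp g.2⟩)) <| by
    refine ⟨Function.Injective.sumElim ?_ ?_ ?_, ?_⟩
    · intro g g' h
      exact Subtype.ext (funext fun i => by simpa using congrFun (congrArg Subtype.val h) i.succ)
    · intro g g' h
      exact Subtype.ext ((Fin.succ_injective _).comp_left (congrArg Subtype.val h))
    · intro g g' h
      exact Fin.succ_ne_zero _ (congrFun (congrArg Subtype.val h) 0).symm
    · rintro ⟨f, hf⟩
      by_cases h0 : f 0 = 0
      · refine ⟨.inl ⟨Fin.tail f, hf.comp Fin.strictMono_succ.monotone⟩, Subtype.ext ?_⟩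
        simp [← h0]
      · have hne : ∀ i, f i ≠ 0 := fun i hi => h0 (nonpos_iff_eq_zero.1 (hi ▸ hf (Fin.zero_le i)))
        refine ⟨.inr ⟨fun i => (f i).pred (hne i), Fin.monotone_pred_comp hne hf⟩, Subtype.ext ?_⟩
        funext i
        simp

variable {R : Type*} [CommRing R]

theorem hpoly_eq_sum_monotone (n d : ℕ) (x : Fin n → R) :
    hpoly n d x = ∑ f : {f : Fin d → Fin n // Monotone f}, ∏ t, x (f.1 t) := rfl

theorem hpoly_zero_right (n : ℕ) (x : Fin n → R) : hpoly n 0 x = 1 := by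
  rw [hpoly_eq_sum_monotone, Fintype.sum_subsingleton _ ⟨finZeroElim, fun i => i.elim0⟩]
  exact prod_empty

theorem hpoly_zero_succ (d : ℕ) (x : Fin 0 → R) : hpoly 0 (d + 1) x = 0 := by
  simp [hpoly_eq_sum_monotone]

theorem hpoly_succ_succ (n d : ℕ) (x : Fin (n + 1) → R) :
    hpoly (n + 1) (d + 1) x = x 0 * hpoly (n + 1) d x + hpoly n (d + 1) (Fin.tail x) := by
  rw [hpoly_eq_sum_monotone, ← (monotoneFinSuccEquiv n d).sum_comp, Fintype.sum_sum_type,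
    hpoly_eq_sum_monotone, mul_sum]
  congr 1
  refine sum_congr rfl fun g _ => ?_
  rw [Fin.prod_univ_succ]
  rfl

end CompleteHomogeneous

theorem hpoly_eq_dividedDiff_pow {F : Type*} [Field F] {n : ℕ} {x : Fin n → F}
    (hx : Function.Injective x) {m : ℕ} (hm : n ≤ m + 1) :
    hpoly n (m + 1 - n) x = dividedDiff univ x (· ^ m) := by
  induction n generalizing m with
  | zero => simp [hpoly_zero_succ, dividedDiff]
  | succ n ihn =>
    obtain ⟨d, rfl⟩ : ∃ d, m = n + d := ⟨m - n, by omega⟩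
    rw [show n + d + 1 - (n + 1) = d by omega]
    clear hm
    induction d with
    | zero =>
      rw [hpoly_zero_right]
      simpa using (dividedDiff_pow_card_sub_one hx.injOn univ_nonempty).symm
    | succ d ihd =>
      have htail := ihn (x := Fin.tail x) (hx.comp (Fin.succ_injective _)) (m := n + d) (by omega)
      rw [show n + d + 1 - n = d + 1 by omega] at htail
      rw [hpoly_succ_succ, ihd, htail, ← add_assoc, dividedDiff_fin_pow_succ hx]

theorem stmt10_general {F : Type*} [Field F] (n m : ℕ) (hm : n - 1 ≤ m)
    (x : Fin n → F) (hx : Function.Injective x) :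
    hpoly n (m + 1 - n) x
      = ∑ i : Fin n, x i ^ m / ∏ j ∈ Finset.univ.erase i, (x i - x j) :=
  hpoly_eq_dividedDiff_pow hx (by omega)

/-- Louck's identity: for `m ≥ n − 1 ≥ 0` and pairwise distinct `x_1,…,x_n`,
`h_{m−n+1}(x_1,…,x_n) = Σ_{i=1}^n x_i^m / ∏_{j≠i}(x_i − x_j)`. -/
theorem stmt10 {F : Type*} [Field F] (n m : ℕ) (hn : 1 ≤ n) (hm : n - 1 ≤ m)
    (x : Fin n → F) (hx : Function.Injective x) :
    hpoly n (m + 1 - n) x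
      = ∑ i : Fin n, x i ^ m / ∏ j ∈ Finset.univ.erase i, (x i - x j) :=
  stmt10_general n m hm x hx
end

section
/- For all integers n ≥ 1 and 1 ≤ c ≤ n, and all β, x, y_1, y_2, … in a commutative ring, [x|y]^{n−c}·(1+βx)^{c−1} = Σ_{j=1}^{n} x^{n−j} · (Σ_{i=0}^{n−j} binom(c−1, i) · E^β_{i−c+j}(Y_{n−c}) · β^i). -/
/-- `E^β_k(Y_n) = Σ_{S ⊆ [n], |S| = k} (∏_{i∈S} y_i)(∏_{j∈[n]∖S} (1 + βy_j))` for
`0 ≤ k ≤ n`, and `0` for `k < 0` or `k > n` (`y t` is `y_{t+1}`, 0-based). -/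
def Ebeta {R : Type*} [CommRing R] (β : R) (y : ℕ → R) (k : ℤ) (n : ℕ) : R :=
  if 0 ≤ k then
    ∑ S ∈ Finset.powersetCard k.toNat (Finset.range n),
      (∏ i ∈ S, y i) * ∏ j ∈ Finset.range n \ S, (1 + β * y j)
  else 0

/-
Writing each factor of `[x|y]^m` as `y_t + x (1 + β y_t)` and expanding shows that the
coefficient of `x^k` in `[x|y]^m` is `E^β_{m-k}(Y_m)`, while that of `x^i` in `(1 + βx)^{c-1}` is
`binom(c-1, i) β^i`. The inner sum of the right-hand side is the Cauchy product of these two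
coefficient sequences at degree `n - j`; as the product has degree `(n - c) + (c - 1) < n`,
summing over `1 ≤ j ≤ n` recovers it completely.
-/

open Finset Polynomial

theorem exists_polynomial_coeff_eq {R : Type*} [CommSemiring R] {f : ℕ → R} {N : ℕ}
    (hf : ∀ k, N < k → f k = 0) (x : R) :
    ∃ p : R[X], p.coeff = f ∧ p.natDegree ≤ N ∧
      p.eval x = ∑ k ∈ range (N + 1), f k * x ^ k := by
  have hcoeff : (∑ k ∈ range (N + 1), C (f k) * X ^ k).coeff = f := by
    ext k
    simp only [finsetSum_coeff, coeff_C_mul_X_pow, sum_ite_eq, mem_range]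
    split_ifs with hk
    · rfl
    · exact (hf k (by omega)).symm
  refine ⟨_, hcoeff, natDegree_le_iff_coeff_eq_zero.2 fun k hk => ?_, by simp [eval_finsetSum]⟩
  rw [hcoeff]
  exact hf k (by exact_mod_cast hk)

theorem sum_range_mul_sum_range_eq_sum_range_convolution {R : Type*} [CommSemiring R]
    {a b : ℕ → R} {m d : ℕ} (ha : ∀ k, m < k → a k = 0) (hb : ∀ i, d < i → b i = 0)
    (x : R) {n : ℕ} (hn : m + d < n) :
    (∑ k ∈ range (m + 1), a k * x ^ k) * ∑ i ∈ range (d + 1), b i * x ^ i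
      = ∑ t ∈ range n, x ^ t * ∑ i ∈ range (t + 1), b i * a (t - i) := by
  obtain ⟨p, hpc, hpd, hpe⟩ := exists_polynomial_coeff_eq ha x
  obtain ⟨q, hqc, hqd, hqe⟩ := exists_polynomial_coeff_eq hb x
  have hdeg : (q * p).natDegree < n := (natDegree_mul_le.trans (by omega)).trans_lt hn
  rw [← hpe, ← hqe, mul_comm, ← eval_mul, eval_eq_sum_range' hdeg]
  refine sum_congr rfl fun t _ => ?_
  rw [coeff_mul, Nat.sum_antidiagonal_eq_sum_range_succ (fun i j => q.coeff i * p.coeff j),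
    hpc, hqc, mul_comm]

theorem Ebeta_of_neg {R : Type*} [CommRing R] (β : R) (y : ℕ → R) {k : ℤ} (hk : k < 0)
    (n : ℕ) :
    Ebeta β y k n = 0 :=
  if_neg hk.not_ge

theorem Ebeta_natCast {R : Type*} [CommRing R] (β : R) (y : ℕ → R) (k n : ℕ) :
    Ebeta β y k n = ∑ S ∈ powersetCard k (range n),
      (∏ i ∈ S, y i) * ∏ j ∈ range n \ S, (1 + β * y j) := by
  simp [Ebeta]

theorem fpow_eq_sum_Ebeta_mul_pow {R : Type*} [CommRing R] (β x : R) (y : ℕ → R) (m : ℕ) :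
    fpow β y x m = ∑ k ∈ range (m + 1), Ebeta β y k m * x ^ (m - k) := by
  have hfactor : ∀ t, x + y t + β * x * y t = y t + x * (1 + β * y t) := fun t => by ring
  simp only [fpow, hfactor]
  rw [prod_add, sum_powerset, card_range]
  simp only [Ebeta_natCast, sum_mul]
  refine sum_congr rfl fun k _ => sum_congr rfl fun S hS => ?_
  obtain ⟨hSm, rfl⟩ := mem_powersetCard.1 hS
  rw [prod_mul_distrib, prod_const, card_sdiff_of_subset hSm, card_range]
  ring

theorem fpow_eq_sum_Ebeta_sub_mul_pow {R : Type*} [CommRing R] (β x : R) (y : ℕ → R) (m : ℕ) :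
    fpow β y x m = ∑ k ∈ range (m + 1), Ebeta β y ((m : ℤ) - k) m * x ^ k := by
  rw [fpow_eq_sum_Ebeta_mul_pow, ← sum_range_reflect]
  refine sum_congr rfl fun k hk => ?_
  have hk := mem_range.1 hk
  rw [show m + 1 - 1 - k = m - k by omega, show m - (m - k) = k by omega, Nat.cast_sub (by omega)]

theorem one_add_mul_pow_eq_sum {R : Type*} [CommSemiring R] (β x : R) (d : ℕ) :
    (1 + β * x) ^ d = ∑ i ∈ range (d + 1), (d.choose i * β ^ i) * x ^ i := by
  rw [add_comm, add_pow]
  refine sum_congr rfl fun i _ => ?_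
  rw [one_pow, mul_one, mul_pow]
  ring

/-- For `1 ≤ c ≤ n`,
`[x|y]^{n−c}(1+βx)^{c−1} = Σ_{j=1}^n x^{n−j} (Σ_{i=0}^{n−j} binom(c−1,i) E^β_{i−c+j}(Y_{n−c}) β^i)`. -/
theorem stmt13 {R : Type*} [CommRing R] (β x : R) (y : ℕ → R) (n c : ℕ)
    (hc1 : 1 ≤ c) (hcn : c ≤ n) :
    fpow β y x (n - c) * (1 + β * x) ^ (c - 1)
      = ∑ j ∈ Finset.Icc 1 n, x ^ (n - j)
          * ∑ i ∈ Finset.range (n - j + 1),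
              (Nat.choose (c - 1) i : R) * Ebeta β y ((i : ℤ) - (c : ℤ) + (j : ℤ)) (n - c)
                * β ^ i := by
  rw [fpow_eq_sum_Ebeta_sub_mul_pow, one_add_mul_pow_eq_sum,
    sum_range_mul_sum_range_eq_sum_range_convolution
      (fun k hk => Ebeta_of_neg β y (by omega) _)
      (fun i hi => by rw [Nat.choose_eq_zero_of_lt hi, Nat.cast_zero, zero_mul]) x
      (show n - c + (c - 1) < n by omega)]
  symm
  refine sum_nbij' (fun j => n - j) (fun t => n - t)
    (fun j hj => by simp only [mem_Icc, mem_range] at hj ⊢; omega)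
    (fun t ht => by simp only [mem_Icc, mem_range] at ht ⊢; omega)
    (fun j hj => by simp only [mem_Icc] at hj; omega)
    (fun t ht => by simp only [mem_range] at ht; omega) fun j hj => ?_
  refine congrArg _ (sum_congr rfl fun i hi => ?_)
  have := mem_Icc.1 hj
  have := mem_range.1 hi
  rw [show (i : ℤ) - c + j = (n - c : ℕ) - (n - j - i : ℕ) by omega]
  ring
end

section
/- For all integers q ≥ 1 and m ≥ 0, every commutative ring R, all β, x_1, …, x_q ∈ R and all y_1, y_2, … ∈ R, the q×q determinant det([x_r|y]^{m+q−c}·(1+βx_r)^{c−1})_{1≤r,c≤q} equals (∏_{r=1}^{q} [x_r|y]^m) · ∏_{1≤i<j≤q}(x_i − x_j). -/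
section

open Finset Matrix

variable {R : Type*} [CommRing R]

theorem Finset.prod_add_mul_eq_sum_esymm {ι : Type*} (s : Finset ι) (y : ι → R) (a b : R) :
    ∏ i ∈ s, (a + y i * b)
      = ∑ k ∈ range (#s + 1), (s.val.map y).esymm k * a ^ (#s - k) * b ^ k := by
  classical
  simp_rw [add_comm a, prod_add, prod_const, sum_powerset, esymm_map_val, sum_mul]
  refine sum_congr rfl fun k _ => sum_congr rfl fun t ht => ?_
  obtain ⟨hts, rfl⟩ := mem_powersetCard.1 ht
  rw [prod_mul_distrib, prod_const, card_sdiff_of_subset hts]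
  ring

theorem Fin.sum_ite_le_eq_sum_range {M : Type*} [AddCommMonoid M] {n : ℕ} (c : Fin n)
    (f : ℕ → M) :
    ∑ k : Fin n, (if c ≤ k then f k else 0) = ∑ s ∈ range (n - c), f (c + s) := by
  simp_rw [Fin.le_iff_val_le_val]
  rw [Fin.sum_univ_eq_sum_range (fun k => if (c : ℕ) ≤ k then f k else 0), sum_ite,
    sum_const_zero, add_zero, ← sum_Ico_eq_sum_range]
  congr 1
  ext k
  simp only [mem_filter, mem_range, mem_Ico]
  omega

theorem fpow_add (β : R) (y : ℕ → R) (x : R) (m j : ℕ) :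
    fpow β y x (m + j) = fpow β y x m * fpow β (fun t => y (m + t)) x j :=
  prod_range_add _ m j

theorem fpow_mul_pow_eq_sum_esymm (β : R) (y : ℕ → R) (x : R) (j c : ℕ) :
    fpow β y x j * (1 + β * x) ^ c
      = ∑ k ∈ range (j + 1),
          ((range j).val.map y).esymm k * x ^ (j - k) * (1 + β * x) ^ (c + k) := by
  have hfactor : fpow β y x j = ∏ t ∈ range j, (x + y t * (1 + β * x)) :=
    prod_congr rfl fun t _ => by ring
  rw [hfactor, prod_add_mul_eq_sum_esymm, card_range, sum_mul]
  refine sum_congr rfl fun k _ => ?_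
  ring

/-- Column `c` holds the coordinates of `[x|y]^(n-1-c) (1+βx)^c` in the basis
`x^(n-1-k) (1+βx)^k`, `k < n`. -/
def fpowCoeffMatrix (y : ℕ → R) (n : ℕ) : Matrix (Fin n) (Fin n) R :=
  of fun k c => if c ≤ k then ((range (n - 1 - c)).val.map y).esymm (k - c) else 0

theorem det_fpowCoeffMatrix (y : ℕ → R) (n : ℕ) : (fpowCoeffMatrix y n).det = 1 := by
  rw [det_of_isLowerTriangular (fpowCoeffMatrix y n) fun k c h =>
    if_neg (not_le.2 (OrderDual.toDual_lt_toDual.1 h))]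
  refine prod_eq_one fun c _ => ?_
  simp [fpowCoeffMatrix, Multiset.esymm]

theorem of_fpow_mul_pow_eq_projVandermonde_mul (β : R) (y : ℕ → R) {n : ℕ}
    (x : Fin n → R) :
    (of fun r c : Fin n => fpow β y (x r) (n - 1 - c) * (1 + β * x r) ^ (c : ℕ))
      = projVandermonde (fun r => 1 + β * x r) x * fpowCoeffMatrix y n := by
  ext r c
  have hc : n - 1 - c + 1 = n - c := by omega
  simp_rw [mul_apply, projVandermonde_apply, fpowCoeffMatrix, of_apply, mul_ite, mul_zero,
    Fin.val_rev]
  rw [Fin.sum_ite_le_eq_sum_range c fun k => (1 + β * x r) ^ k * x r ^ (n - (k + 1)) *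
    ((range (n - 1 - c)).val.map y).esymm (k - c), fpow_mul_pow_eq_sum_esymm, hc]
  refine sum_congr rfl fun s _ => ?_
  rw [Nat.add_sub_cancel_left, show n - (c + s + 1) = n - 1 - c - s by omega]
  ring

theorem det_projVandermonde_one_add_mul (β : R) {n : ℕ} (x : Fin n → R) :
    (projVandermonde (fun r => 1 + β * x r) x).det
      = ∏ i : Fin n, ∏ j ∈ Ioi i, (x i - x j) := by
  rw [det_projVandermonde]
  refine prod_congr rfl fun i _ => prod_congr rfl fun j _ => ?_
  ring

theorem det_fpow_mul_pow (β : R) (y : ℕ → R) {n : ℕ} (x : Fin n → R) :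
    (of fun r c : Fin n => fpow β y (x r) (n - 1 - c) * (1 + β * x r) ^ (c : ℕ)).det
      = ∏ i : Fin n, ∏ j ∈ Ioi i, (x i - x j) := by
  rw [of_fpow_mul_pow_eq_projVandermonde_mul, det_mul, det_fpowCoeffMatrix, mul_one,
    det_projVandermonde_one_add_mul]

end

theorem stmt17_general {R : Type*} [CommRing R] (q m : ℕ)
    (β : R) (x : Fin q → R) (y : ℕ → R) :
    (Matrix.of fun r c : Fin q =>
        fpow β y (x r) (m + (q - 1 - (c : ℕ))) * (1 + β * x r) ^ (c : ℕ)).det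
      = (∏ r : Fin q, fpow β y (x r) m) * ∏ i : Fin q, ∏ j ∈ Finset.Ioi i, (x i - x j) := by
  simp_rw [fpow_add, mul_assoc]
  exact (Matrix.det_mul_column _ _).trans (congrArg _ (det_fpow_mul_pow β _ x))

/-- `det([x_r|y]^{m+q−c}(1+βx_r)^{c−1})_{1≤r,c≤q}
  = (∏_{r=1}^q [x_r|y]^m) ∏_{1≤i<j≤q}(x_i − x_j)`. -/
theorem stmt17 {R : Type*} [CommRing R] (q m : ℕ) (hq : 1 ≤ q)
    (β : R) (x : Fin q → R) (y : ℕ → R) :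
    (Matrix.of fun r c : Fin q =>
        fpow β y (x r) (m + (q - 1 - (c : ℕ))) * (1 + β * x r) ^ (c : ℕ)).det
      = (∏ r : Fin q, fpow β y (x r) m) * ∏ i : Fin q, ∏ j ∈ Finset.Ioi i, (x i - x j) :=
  stmt17_general q m β x y
end

section
/- Let n ≥ 1 and let S be a k-element subset of [n] = {1,…,n} with complement S̄ = [n] ∖ S. Then for all x_1, …, x_n in a commutative ring, ∏_{1≤i<j≤n}(x_i − x_j) = (−1)^{(Σ_{r∈S} r) − k(k+1)/2} · (∏_{i<j, i,j∈S}(x_i − x_j)) · (∏_{i<j, i,j∈S̄}(x_i − x_j)) · (∏_{i∈S}∏_{j∈S̄}(x_i − x_j)). -/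
/-!
Sort the pairs `i < j` by whether `i` and `j` lie in `S`. Pairs inside `S` or inside `S̄` give
the two smaller Vandermonde products. A mixed pair with `i ∈ S̄`, `j ∈ S` must be flipped to
`x_j - x_i`, costing a sign each time. Counting 0-based, `j` is the number of all predecessors of
`j`, and the predecessors inside `S` of the elements of `S` number `0 + 1 + ⋯ + (k - 1)`, so
there are `Σ_{j ∈ S} j - k(k-1)/2` flips.
-/

open Finset

section LinearOrder

variable {α : Type*} [LinearOrder α]

lemma prod_filter_gt_mul_prod_filter_lt {M : Type*} [CommMonoid M] {U : Finset α} {i : α}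
    (hi : i ∉ U) (f : α → M) :
    (∏ j ∈ U.filter (i < ·), f j) * ∏ j ∈ U.filter (· < i), f j = ∏ j ∈ U, f j := by
  rw [← prod_filter_mul_prod_filter_not U (i < ·)]
  congr 1
  refine prod_congr (filter_congr fun j hj => ?_) fun _ _ => rfl
  rw [not_lt, le_iff_lt_or_eq, or_iff_left (ne_of_mem_of_not_mem hj hi)]

lemma sum_card_filter_lt_eq_choose_two (S : Finset α) :
    ∑ j ∈ S, #(S.filter (· < j)) = (#S).choose 2 := by
  induction S using Finset.induction_on_max with
  | empty => simp
  | insert a s ha ih =>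
    have hna : a ∉ s := fun h => lt_irrefl a (ha a h)
    have below_a : (insert a s).filter (· < a) = s := by
      ext y
      simp only [mem_filter, mem_insert]
      exact ⟨fun ⟨h, hy⟩ => h.resolve_left hy.ne, fun h => ⟨Or.inr h, ha y h⟩⟩
    have below_s : ∀ j ∈ s, #((insert a s).filter (· < j)) = #(s.filter (· < j)) := by
      intro j hj
      rw [filter_insert, if_neg (ha j hj).not_gt]
    rw [sum_insert hna, card_insert_of_notMem hna, below_a, sum_congr rfl below_s, ih,
      Nat.choose_succ_succ', Nat.choose_one_right, add_comm]

section CommRing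

variable {R : Type*} [CommRing R]

lemma prod_prod_sub_filter_lt_mul_of_disjoint {S T : Finset α} (hST : Disjoint S T) (x : α → R) :
    (∏ i ∈ S, ∏ j ∈ T.filter (i < ·), (x i - x j)) * ∏ i ∈ T, ∏ j ∈ S.filter (i < ·), (x i - x j)
      = (-1) ^ (∑ j ∈ S, #(T.filter (· < j))) * ∏ i ∈ S, ∏ j ∈ T, (x i - x j) := by
  have swap : ∏ i ∈ T, ∏ j ∈ S.filter (i < ·), (x i - x j)
      = ∏ j ∈ S, ∏ i ∈ T.filter (· < j), (x i - x j) :=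
    prod_comm' fun i j => by simp only [mem_filter]; tauto
  have flip : ∀ j ∈ S, ∏ i ∈ T.filter (· < j), (x i - x j)
      = (-1) ^ #(T.filter (· < j)) * ∏ i ∈ T.filter (· < j), (x j - x i) := fun j _ => by
    rw [← prod_neg]; simp only [neg_sub]
  rw [swap, prod_congr rfl flip, prod_mul_distrib, prod_pow_eq_pow_sum, mul_left_comm,
    ← prod_mul_distrib]
  congr 1
  exact prod_congr rfl fun i hi =>
    prod_filter_gt_mul_prod_filter_lt (Finset.disjoint_left.mp hST hi) _

end CommRing

variable [Fintype α] [DecidableEq α]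

lemma prod_prod_Ioi_eq_mul_compl {M : Type*} [CommMonoid M] [LocallyFiniteOrderTop α]
    (S : Finset α) (g : α → α → M) :
    ∏ i, ∏ j ∈ Ioi i, g i j =
      (∏ i ∈ S, ∏ j ∈ S.filter (i < ·), g i j) * (∏ i ∈ Sᶜ, ∏ j ∈ Sᶜ.filter (i < ·), g i j) *
        ((∏ i ∈ S, ∏ j ∈ Sᶜ.filter (i < ·), g i j) * ∏ i ∈ Sᶜ, ∏ j ∈ S.filter (i < ·), g i j) := by
  have inner : ∀ i, ∏ j ∈ Ioi i, g i j
      = (∏ j ∈ S.filter (i < ·), g i j) * ∏ j ∈ Sᶜ.filter (i < ·), g i j := fun i => by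
    rw [← filter_lt_eq_Ioi, prod_filter, prod_filter, prod_filter, prod_mul_prod_compl]
  simp only [inner, prod_mul_distrib, ← prod_mul_prod_compl S]
  ac_rfl

lemma card_filter_compl_lt_add_card_filter_lt [LocallyFiniteOrderBot α] (S : Finset α) (j : α) :
    #(Sᶜ.filter (· < j)) + #(S.filter (· < j)) = #(Iio j) := by
  rw [card_filter, card_filter, add_comm, sum_add_sum_compl, ← card_filter, filter_gt_eq_Iio]

end LinearOrder

lemma sum_card_filter_compl_lt_fin {n : ℕ} (S : Finset (Fin n)) :
    ∑ j ∈ S, #(Sᶜ.filter (· < j)) = ∑ r ∈ S, ((r : ℕ) + 1) - #S * (#S + 1) / 2 := by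
  have total : ∑ j ∈ S, #(Sᶜ.filter (· < j)) + (#S).choose 2 = ∑ r ∈ S, (r : ℕ) := by
    rw [← sum_card_filter_lt_eq_choose_two, ← sum_add_distrib]
    exact sum_congr rfl fun j _ => by rw [card_filter_compl_lt_add_card_filter_lt, Fin.card_Iio]
  have gauss : #S * (#S + 1) / 2 = (#S).choose 2 + #S := by
    have := Nat.choose_two_right (#S + 1)
    rw [Nat.add_sub_cancel, Nat.choose_succ_succ', Nat.choose_one_right] at this
    rw [mul_comm, ← this, add_comm]
  rw [sum_add_distrib, sum_const, smul_eq_mul, mul_one, gauss]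
  omega

/-- Elements of `Fin n` are 0-based, so `r ∈ S` contributes `r + 1` to the sign exponent; the
truncated subtraction is harmless since `Σ_{r∈S}(r+1) ≥ 1 + 2 + ⋯ + k`. -/
theorem stmt18_general {R : Type*} [CommRing R] (n k : ℕ)
    (x : Fin n → R) (S : Finset (Fin n)) (hS : S.card = k) :
    ∏ i : Fin n, ∏ j ∈ Finset.Ioi i, (x i - x j)
      = (-1 : R) ^ ((∑ r ∈ S, ((r : ℕ) + 1)) - k * (k + 1) / 2)
        * (∏ i ∈ S, ∏ j ∈ S.filter (fun j => i < j), (x i - x j))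
        * (∏ i ∈ Sᶜ, ∏ j ∈ Sᶜ.filter (fun j => i < j), (x i - x j))
        * ∏ i ∈ S, ∏ j ∈ Sᶜ, (x i - x j) := by
  rw [prod_prod_Ioi_eq_mul_compl S, prod_prod_sub_filter_lt_mul_of_disjoint disjoint_compl_right,
    sum_card_filter_compl_lt_fin, hS]
  ring

/-- Decomposition of the Vandermonde product along a `k`-subset `S` of `[n]`:
`∏_{1≤i<j≤n}(x_i − x_j) = (−1)^{(Σ_{r∈S} r) − k(k+1)/2} (∏_{i<j, i,j∈S}(x_i−x_j))
(∏_{i<j, i,j∈S̄}(x_i−x_j)) (∏_{i∈S}∏_{j∈S̄}(x_i−x_j))`.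
Elements of `Fin n` are 0-based, so `r ∈ S` contributes `r + 1` to the sign exponent;
the exponent `(Σ_{r∈S}(r+1)) − k(k+1)/2` is a genuine natural number since
`Σ_{r∈S}(r+1) ≥ 1 + 2 + ⋯ + k = k(k+1)/2`. -/
theorem stmt18 {R : Type*} [CommRing R] (n k : ℕ) (hn : 1 ≤ n)
    (x : Fin n → R) (S : Finset (Fin n)) (hS : S.card = k) :
    ∏ i : Fin n, ∏ j ∈ Finset.Ioi i, (x i - x j)
      = (-1 : R) ^ ((∑ r ∈ S, ((r : ℕ) + 1)) - k * (k + 1) / 2)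
        * (∏ i ∈ S, ∏ j ∈ S.filter (fun j => i < j), (x i - x j))
        * (∏ i ∈ Sᶜ, ∏ j ∈ Sᶜ.filter (fun j => i < j), (x i - x j))
        * ∏ i ∈ S, ∏ j ∈ Sᶜ, (x i - x j) :=
  stmt18_general n k x S hS
end
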